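/- arXiv:1302.3676 — 2 statements merged into one kernel-verified Lean document; each statement's English description precedes it below -/
import Mathlib

section
/- For an odd prime p, the superfactorial sf(p-1) = ∏_{k=1}^{p-1} k! satisfies sf(p-1) ≡ (-1)^((p^2-1)/8) · ((p-1)/2)! (mod p). -/
/-!
Write `p = 2m + 1`, so that `sf (p - 1) = ∏_{k ≤ 2m} k!`. Pair the factor `k!` with `(p - 1 - k)!`
for `k < m`, leaving `m!` alone in the middle. Wilson's theorem, split as
`(p - 1)! = (p - 1 - k)! · (p - 1) ⋯ (p - k) ≡ (p - 1 - k)! · (-1)^k k!`, gives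
`k! (p - 1 - k)! ≡ (-1)^(k + 1)`, so the pairs contribute `(-1)^(1 + ⋯ + m) = (-1)^(m(m + 1)/2)`,
and `m(m + 1)/2 = (p² - 1)/8`.
-/

def sf (n : ℕ) : ℕ := ∏ k ∈ Finset.Icc 1 n, Nat.factorial k

open Finset

theorem Finset.prod_range_two_mul_add_one {M : Type*} [CommMonoid M] (f : ℕ → M) (m : ℕ) :
    ∏ k ∈ range (2 * m + 1), f k = f m * ∏ k ∈ range m, (f k * f (2 * m - k)) := by
  have hupper : ∏ k ∈ range m, f (m + 1 + k) = ∏ k ∈ range m, f (2 * m - k) := by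
    rw [← prod_range_reflect]
    refine prod_congr rfl fun k hk => congrArg f ?_
    have := mem_range.mp hk
    omega
  rw [show 2 * m + 1 = m + 1 + m by omega, prod_range_add, prod_range_succ, hupper,
    prod_mul_distrib]
  ac_rfl

theorem ZMod.factorial_mul_factorial_sub_one_sub {p : ℕ} [Fact p.Prime] {k : ℕ} (hk : k < p) :
    (k.factorial * (p - 1 - k).factorial : ZMod p) = (-1) ^ (k + 1) := by
  have hwilson := congrArg (Nat.cast : ℕ → ZMod p)
    (Nat.factorial_mul_descFactorial (n := p - 1) (k := k) (by omega))
  push_cast at hwilson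
  rw [ZMod.cast_descFactorial hk.le, ZMod.wilsons_lemma] at hwilson
  have hsq : ((-1 : ZMod p) ^ k) ^ 2 = 1 := by rw [← pow_mul, pow_mul', neg_one_sq, one_pow]
  linear_combination
    (-1 : ZMod p) ^ k * hwilson - (k.factorial * (p - 1 - k).factorial : ZMod p) * hsq

theorem sum_range_succ_eq_odd_sq_sub_one_div_eight (m : ℕ) :
    ∑ k ∈ range m, (k + 1) = ((2 * m + 1) ^ 2 - 1) / 8 := by
  have hgauss : ∑ k ∈ range m, (k + 1) = (m + 1) * m / 2 := by
    simpa [sum_range_id] using (sum_range_succ' (fun i => i) m).symm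
  have hsq : (2 * m + 1) ^ 2 = 4 * ((m + 1) * m) + 1 := by ring
  rw [hgauss, hsq]
  omega

theorem stmt3 (p : ℕ) (hp : p.Prime) (hodd : Odd p) :
    (sf (p - 1) : ZMod p) = (-1) ^ ((p ^ 2 - 1) / 8) * (Nat.factorial ((p - 1) / 2) : ZMod p) := by
  have := Fact.mk hp
  obtain ⟨m, rfl⟩ := hodd
  have hpair : ∀ k ∈ range m,
      (k.factorial * (2 * m - k).factorial : ZMod (2 * m + 1)) = (-1) ^ (k + 1) :=
    fun k hk => by
      have := ZMod.factorial_mul_factorial_sub_one_sub (p := 2 * m + 1) (k := k)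
        (by have := mem_range.mp hk; omega)
      rwa [show 2 * m + 1 - 1 - k = 2 * m - k by omega] at this
  rw [show 2 * m + 1 - 1 = 2 * m by omega, show 2 * m / 2 = m by omega, sf,
    Nat.prod_Icc_factorial, ← Nat.prod_range_succ_factorial, Nat.cast_prod,
    prod_range_two_mul_add_one, prod_congr rfl hpair, prod_pow_eq_pow_sum,
    sum_range_succ_eq_odd_sq_sub_one_div_eight]
  exact mul_comm _ _
end

section
/- For an odd prime p, (p-1)!! ≡ sf(p-1) ≡ (-1)^((p-1)/2) · H(p-1) (mod p). -/
def hyperfactorial (n : ℕ) : ℕ := ∏ k ∈ Finset.Icc 1 n, k ^ k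

/-!
Write `p = 2m + 1`. Pairing `k` with `p - k ≡ -k` turns Wilson's theorem into `(m!)² = (-1)^(m+1)`,
and, together with Fermat's `k^p = k`, gives `H(p-1) = (-1)^(m + m(m+1)/2) m!`.
Since `sf(n) H(n) = (n!)^(n+1)`, Wilson also gives `sf(p-1) H(p-1) = -1`; as `H(p-1)² = (m!)²`,
this yields `sf(p-1) = (-1)^m H(p-1) = (-1)^(m(m+1)/2) m!`. Finally `(p-1)!! = 2^m m!`, and
`2^m = (2/p) = (-1)^(m(m+1)/2)` by Euler's criterion and the second supplementary law.
-/

open Finset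

theorem sf_succ (n : ℕ) : sf (n + 1) = sf n * (n + 1).factorial :=
  prod_Icc_succ_top (by omega) _

theorem hyperfactorial_succ (n : ℕ) :
    hyperfactorial (n + 1) = hyperfactorial n * (n + 1) ^ (n + 1) :=
  prod_Icc_succ_top (by omega) _

theorem sf_mul_hyperfactorial (n : ℕ) : sf n * hyperfactorial n = n.factorial ^ (n + 1) := by
  induction n with
  | zero => rfl
  | succ n ih =>
    rw [sf_succ, hyperfactorial_succ, Nat.factorial_succ, mul_pow, pow_succ n.factorial, ← ih]
    ring

theorem Finset.prod_Icc_id_eq_factorial (n : ℕ) : ∏ k ∈ Icc 1 n, k = n.factorial := by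
  rw [← Ico_add_one_right_eq_Icc, prod_Ico_id_eq_factorial]

theorem Finset.sum_Icc_id_mul_two (n : ℕ) : (∑ k ∈ Icc 1 n, k) * 2 = n * (n + 1) := by
  induction n with
  | zero => rfl
  | succ n ih => rw [sum_Icc_succ_top (by omega), add_mul, ih]; ring

theorem Finset.prod_Icc_two_mul_eq_prod_mul_reflect {M : Type*} [CommMonoid M] (f : ℕ → M)
    (m : ℕ) : ∏ k ∈ Icc 1 (2 * m), f k = ∏ k ∈ Icc 1 m, f k * f (2 * m + 1 - k) := by
  rw [← Ico_add_one_right_eq_Icc, ← Ico_add_one_right_eq_Icc, prod_mul_distrib,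
    ← prod_Ico_consecutive f (show 1 ≤ m + 1 by omega) (show m + 1 ≤ 2 * m + 1 by omega),
    prod_Ico_reflect f 1 (n := 2 * m + 1) (by omega)]
  congr 3
  omega

theorem neg_one_pow_sq {R : Type*} [Monoid R] [HasDistribNeg R] (n : ℕ) :
    ((-1 : R) ^ n) ^ 2 = 1 := by
  rw [← pow_mul, mul_comm, pow_mul, neg_one_sq, one_pow]

theorem ZMod.natCast_eq_neg_of_add_eq {n a b : ℕ} (h : a + b = n) : (a : ZMod n) = -b := by
  rw [eq_neg_iff_add_eq_zero, ← Nat.cast_add, h, ZMod.natCast_self]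

theorem ZMod.sf_mul_hyperfactorial_eq_neg_one {p : ℕ} [Fact p.Prime] :
    (sf (p - 1) * hyperfactorial (p - 1) : ZMod p) = -1 := by
  rw [← Nat.cast_mul, sf_mul_hyperfactorial, Nat.cast_pow, ZMod.wilsons_lemma,
    Nat.sub_add_cancel (Fact.out : p.Prime).one_le, ZMod.pow_card]

section
variable {p m : ℕ} [Fact p.Prime]

theorem ZMod.factorial_sq_eq_neg_one_pow (hp : p = 2 * m + 1) :
    (m.factorial : ZMod p) ^ 2 = (-1) ^ (m + 1) := by
  have hpair : ∀ k ∈ Icc 1 m, ((k * (2 * m + 1 - k) : ℕ) : ZMod p) = -1 * (k : ZMod p) ^ 2 := by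
    intro k hk
    rw [Nat.cast_mul, ZMod.natCast_eq_neg_of_add_eq (a := 2 * m + 1 - k) (b := k)
      (by have := (mem_Icc.mp hk).2; omega)]
    ring
  have hwilson : ((2 * m).factorial : ZMod p) = -1 := by
    simpa [hp] using ZMod.wilsons_lemma (p := p)
  rw [← prod_Icc_id_eq_factorial, prod_Icc_two_mul_eq_prod_mul_reflect, Nat.cast_prod,
    prod_congr rfl hpair, prod_mul_distrib, prod_const, Nat.card_Icc, Nat.add_sub_cancel,
    prod_pow, ← Nat.cast_prod, prod_Icc_id_eq_factorial] at hwilson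
  linear_combination (-1 : ZMod p) ^ m * hwilson
    - (m.factorial : ZMod p) ^ 2 * neg_one_pow_sq (R := ZMod p) m

theorem ZMod.hyperfactorial_eq_neg_one_pow_mul_factorial (hp : p = 2 * m + 1) :
    (hyperfactorial (2 * m) : ZMod p) = (-1) ^ (m + m * (m + 1) / 2) * m.factorial := by
  have hpair : ∀ k ∈ Icc 1 m,
      ((k ^ k * (2 * m + 1 - k) ^ (2 * m + 1 - k) : ℕ) : ZMod p) = (-1) ^ (k + 1) * k := by
    intro k hk
    have hk' := (mem_Icc.mp hk).2
    -- `k ^ k * (-k) ^ (p - k) = (-1) ^ (p - k) * k ^ p`, and `k ^ p = k` by Fermat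
    rw [Nat.cast_mul, Nat.cast_pow, Nat.cast_pow,
      ZMod.natCast_eq_neg_of_add_eq (a := 2 * m + 1 - k) (b := k) (by omega), neg_pow,
      mul_left_comm, ← pow_add, show k + (2 * m + 1 - k) = p by omega, ZMod.pow_card,
      neg_one_pow_eq_pow_mod_two, neg_one_pow_eq_pow_mod_two (k + 1)]
    congr 2
    omega
  have hsum := sum_Icc_id_mul_two m
  rw [hyperfactorial, prod_Icc_two_mul_eq_prod_mul_reflect, Nat.cast_prod, prod_congr rfl hpair,
    prod_mul_distrib, prod_pow_eq_pow_sum, ← Nat.cast_prod, prod_Icc_id_eq_factorial,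
    sum_add_distrib, sum_const, Nat.card_Icc, smul_eq_mul, mul_one]
  congr 2
  omega

theorem ZMod.sf_eq_neg_one_pow_mul_hyperfactorial (hp : p = 2 * m + 1) :
    (sf (2 * m) : ZMod p) = (-1) ^ m * hyperfactorial (2 * m) := by
  have hsfH : (sf (2 * m) * hyperfactorial (2 * m) : ZMod p) = -1 := by
    simpa [hp] using ZMod.sf_mul_hyperfactorial_eq_neg_one (p := p)
  have hH : (hyperfactorial (2 * m) : ZMod p) ^ 2 = (-1) ^ m * -1 := by
    rw [hyperfactorial_eq_neg_one_pow_mul_factorial hp, mul_pow, neg_one_pow_sq, one_mul,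
      factorial_sq_eq_neg_one_pow hp, pow_succ]
  linear_combination (-(-1) ^ m * (hyperfactorial (2 * m) : ZMod p)) * hsfH
    + ((-1) ^ m * (sf (2 * m) : ZMod p)) * hH
    - (sf (2 * m) : ZMod p) * neg_one_pow_sq (R := ZMod p) m

theorem ZMod.two_pow_eq_neg_one_pow (hp : p = 2 * m + 1) :
    (2 : ZMod p) ^ m = (-1) ^ (m * (m + 1) / 2) := by
  have h : ((legendreSym p 2 : ℤ) : ZMod p) = 2 ^ m := by
    exact_mod_cast (show p / 2 = m by omega) ▸ legendreSym.eq_pow p 2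
  rw [legendreSym.at_two (by omega), ZMod.χ₈_nat_eq_if_mod_eight] at h
  have hpar : Even (m * (m + 1) / 2) ↔ p % 8 = 1 ∨ p % 8 = 7 := by
    obtain ⟨q, r, hr, rfl⟩ : ∃ q r, r < 4 ∧ m = 4 * q + r := ⟨m / 4, m % 4, by omega, by omega⟩
    have hsq : (4 * q + r) * (4 * q + r + 1)
        = 16 * (q * q) + 4 * q * (2 * r + 1) + r * (r + 1) := by ring
    rw [Nat.even_iff]
    interval_cases r <;> omega
  rw [← h]
  split_ifs with h2 h8
  · omega
  · rw [Even.neg_one_pow (hpar.mpr h8), Int.cast_one]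
  · rw [Odd.neg_one_pow (Nat.not_even_iff_odd.mp (hpar.not.mpr h8)), Int.cast_neg, Int.cast_one]

end

theorem stmt12 (p : ℕ) (hp : p.Prime) (hodd : Odd p) :
    (Nat.doubleFactorial (p - 1) : ZMod p) = (sf (p - 1) : ZMod p) ∧
    (sf (p - 1) : ZMod p) = (-1) ^ ((p - 1) / 2) * (hyperfactorial (p - 1) : ZMod p) := by
  have : Fact p.Prime := ⟨hp⟩
  obtain ⟨m, hm⟩ := hodd
  rw [show p - 1 = 2 * m by omega, show 2 * m / 2 = m by omega,
    ZMod.sf_eq_neg_one_pow_mul_hyperfactorial hm]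
  refine ⟨?_, rfl⟩
  rw [Nat.doubleFactorial_two_mul, Nat.cast_mul, Nat.cast_pow, Nat.cast_ofNat,
    ZMod.two_pow_eq_neg_one_pow hm, ZMod.hyperfactorial_eq_neg_one_pow_mul_factorial hm,
    pow_add, ← mul_assoc, ← mul_assoc, ← sq, neg_one_pow_sq, one_mul]
end
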